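/- arXiv:2603.09577 — 3 statements merged into one kernel-verified Lean document; each statement's English description precedes it below -/
import Mathlib

section
/- Let C > 0 and σ_X > 0, and set β = C/σ_X. The differential entropy of the truncated Gaussian density satisfies −∫_{−C}^{C} p_X̃(x) · ln(p_X̃(x)) dx = ln(√(2πe) · σ_X · erf(β/√2)) − γ(β). -/
open MeasureTheory Real

/-- The error function `erf a = (2/√π) ∫₀^a e^{−t²} dt`. -/
noncomputable def erf (a : ℝ) : ℝ := (2 / Real.sqrt π) * ∫ t in (0:ℝ)..a, Real.exp (-t ^ 2)

/-- The standard Gaussian density `φ(a) = e^{−a²/2}/√(2π)`. -/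
noncomputable def stdGauss (a : ℝ) : ℝ := Real.exp (-a ^ 2 / 2) / Real.sqrt (2 * π)

/-- `γ(a) = a·φ(a)/erf(a/√2)`. -/
noncomputable def gam (a : ℝ) : ℝ := a * stdGauss a / erf (a / Real.sqrt 2)

/-- The truncated Gaussian density on `[−C, C]` with parameter `σ`. -/
noncomputable def truncGaussPdf (C σ : ℝ) (x : ℝ) : ℝ :=
  if x ∈ Set.Icc (-C) C then stdGauss (x / σ) / (σ * erf ((C / σ) / Real.sqrt 2)) else 0

lemma erf_pos' {a : ℝ} (ha : 0 < a) : 0 < erf a := by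
  unfold erf
  have h1 : 0 < Real.sqrt π := Real.sqrt_pos.mpr Real.pi_pos
  have h2 : 0 < ∫ t in (0:ℝ)..a, Real.exp (-t ^ 2) := by
    apply intervalIntegral.intervalIntegral_pos_of_pos
    · exact (Continuous.rexp (by continuity)).intervalIntegrable 0 a
    · intro x; exact Real.exp_pos _
    · exact ha
  positivity

lemma even_gauss (c : ℝ) :
    ∫ t in (-c)..c, Real.exp (-t ^ 2) = 2 * ∫ t in (0:ℝ)..c, Real.exp (-t ^ 2) := by
  have hInt : ∀ a b : ℝ, IntervalIntegrable (fun t => Real.exp (-t ^ 2)) volume a b :=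
    fun a b => (Continuous.rexp (by continuity)).intervalIntegrable a b
  have h1 : ∫ t in (-c)..(0:ℝ), Real.exp (-t ^ 2) = ∫ t in (0:ℝ)..c, Real.exp (-t ^ 2) := by
    have := intervalIntegral.integral_comp_neg (a := (0:ℝ)) (b := c)
      (fun t => Real.exp (-t ^ 2))
    simp only [neg_neg, neg_zero, neg_sq] at this ⊢
    rw [← this]
  rw [← intervalIntegral.integral_add_adjacent_intervals (hInt (-c) 0) (hInt 0 c), h1]
  ring

lemma gauss0 (C σ : ℝ) (hσ : 0 < σ) :
    ∫ x in (-C)..C, Real.exp (-x ^ 2 / (2 * σ ^ 2))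
      = Real.sqrt (2 * π) * σ * erf (C / σ / Real.sqrt 2) := by
  have h2 : (0:ℝ) < Real.sqrt 2 := by positivity
  have hc : σ * Real.sqrt 2 ≠ 0 := by positivity
  have key : ∀ x : ℝ, Real.exp (-x ^ 2 / (2 * σ ^ 2))
      = (fun t => Real.exp (-t ^ 2)) (x / (σ * Real.sqrt 2)) := by
    intro x
    simp only
    congr 1
    rw [div_pow, mul_pow, Real.sq_sqrt (by norm_num : (0:ℝ) ≤ 2)]
    ring
  calc ∫ x in (-C)..C, Real.exp (-x ^ 2 / (2 * σ ^ 2))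
      = ∫ x in (-C)..C, (fun t => Real.exp (-t ^ 2)) (x / (σ * Real.sqrt 2)) := by
        exact intervalIntegral.integral_congr (fun x _ => key x)
    _ = (σ * Real.sqrt 2) • ∫ t in (-C / (σ * Real.sqrt 2))..(C / (σ * Real.sqrt 2)),
          Real.exp (-t ^ 2) := by
        have h := intervalIntegral.integral_comp_div (a := -C) (b := C)
          (c := σ * Real.sqrt 2) (fun t => Real.exp (-t ^ 2)) hc
        simpa using h
    _ = Real.sqrt (2 * π) * σ * erf (C / σ / Real.sqrt 2) := by
        rw [neg_div]
        rw [even_gauss (C / (σ * Real.sqrt 2)), erf]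
        have hCd : C / (σ * Real.sqrt 2) = C / σ / Real.sqrt 2 := by rw [div_div]
        rw [hCd, smul_eq_mul]
        have hsp : Real.sqrt (2 * π) = Real.sqrt 2 * Real.sqrt π :=
          Real.sqrt_mul (by norm_num) _
        have hπ : (0:ℝ) < Real.sqrt π := Real.sqrt_pos.mpr Real.pi_pos
        rw [hsp]
        field_simp

lemma I2_eq (C σ : ℝ) (hσ : 0 < σ) :
    ∫ x in (-C)..C, (x ^ 2 - σ ^ 2) * Real.exp (-x ^ 2 / (2 * σ ^ 2))
      = -2 * σ ^ 2 * C * Real.exp (-C ^ 2 / (2 * σ ^ 2)) := by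
  have hσ2 : σ ^ 2 ≠ 0 := by positivity
  have hd : ∀ x : ℝ, HasDerivAt (fun x : ℝ => -σ ^ 2 * x * Real.exp (-x ^ 2 / (2 * σ ^ 2)))
      ((x ^ 2 - σ ^ 2) * Real.exp (-x ^ 2 / (2 * σ ^ 2))) x := by
    intro x
    have h1 : HasDerivAt (fun x : ℝ => -x ^ 2 / (2 * σ ^ 2)) (-(2 * x) / (2 * σ ^ 2)) x := by
      have := (hasDerivAt_pow 2 x).neg.div_const (2 * σ ^ 2)
      simpa using this
    have h2 := h1.exp
    have h3 : HasDerivAt (fun x : ℝ => -σ ^ 2 * x) (-σ ^ 2) x := by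
      simpa using (hasDerivAt_id x).const_mul (-σ ^ 2)
    have : HasDerivAt (fun x : ℝ => -σ ^ 2 * x * Real.exp (-x ^ 2 / (2 * σ ^ 2))) _ x := h3.mul h2
    convert this using 1
    field_simp
    ring
  have hInt : IntervalIntegrable (fun x => (x ^ 2 - σ ^ 2) * Real.exp (-x ^ 2 / (2 * σ ^ 2)))
      volume (-C) C := (Continuous.mul (by continuity) (Continuous.rexp (by continuity))).intervalIntegrable _ _
  rw [intervalIntegral.integral_eq_sub_of_hasDerivAt (fun x _ => hd x) hInt]
  have : (-C : ℝ) ^ 2 = C ^ 2 := by ring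
  rw [this]
  ring

/-- The differential entropy of the truncated Gaussian density:
`−∫_{−C}^{C} p_X̃ ln p_X̃ = ln(√(2πe)·σ_X·erf(β/√2)) − γ(β)` with `β = C/σ_X`. -/
theorem truncGauss_diffEntropy (C σX : ℝ) (hC : 0 < C) (hσ : 0 < σX) :
    -∫ x in (-C)..C, truncGaussPdf C σX x * Real.log (truncGaussPdf C σX x)
      = Real.log (Real.sqrt (2 * π * Real.exp 1) * σX * erf ((C / σX) / Real.sqrt 2))
        - gam (C / σX) := by
  have hE : 0 < erf (C / σX / Real.sqrt 2) := erf_pos' (by positivity)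
  set E := erf (C / σX / Real.sqrt 2) with hEdef
  set A := Real.sqrt (2 * π) * σX * E with hAdef
  have hsp : (0:ℝ) < Real.sqrt (2 * π) := Real.sqrt_pos.mpr (by positivity)
  have hA : 0 < A := by rw [hAdef]; positivity
  have hσ2 : σX ^ 2 ≠ 0 := by positivity
  set c1 : ℝ := -(1 / (2 * σX ^ 2 * A)) with hc1
  set c2 : ℝ := -((1 / 2 + Real.log A) / A) with hc2
  -- rewrite the integrand on [-C, C]
  have hcongr : ∀ x ∈ Set.uIcc (-C) C,
      truncGaussPdf C σX x * Real.log (truncGaussPdf C σX x)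
        = c1 * ((x ^ 2 - σX ^ 2) * Real.exp (-x ^ 2 / (2 * σX ^ 2)))
          + c2 * Real.exp (-x ^ 2 / (2 * σX ^ 2)) := by
    intro x hx
    rw [Set.uIcc_of_le (by linarith)] at hx
    have hp : truncGaussPdf C σX x = Real.exp (-x ^ 2 / (2 * σX ^ 2)) / A := by
      rw [truncGaussPdf, if_pos hx, stdGauss]
      have harg : -(x / σX) ^ 2 / 2 = -x ^ 2 / (2 * σX ^ 2) := by
        rw [div_pow]; ring
      rw [harg, hAdef, ← hEdef]
      field_simp
    rw [hp, Real.log_div (Real.exp_ne_zero _) (ne_of_gt hA), Real.log_exp]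
    rw [hc1, hc2]
    field_simp
    ring
  rw [intervalIntegral.integral_congr hcongr]
  have hInt1 : IntervalIntegrable (fun x => c1 * ((x ^ 2 - σX ^ 2) * Real.exp (-x ^ 2 / (2 * σX ^ 2))))
      volume (-C) C := (Continuous.mul continuous_const ((Continuous.mul (by continuity)
        (Continuous.rexp (by continuity))))).intervalIntegrable _ _
  have hInt2 : IntervalIntegrable (fun x => c2 * Real.exp (-x ^ 2 / (2 * σX ^ 2)))
      volume (-C) C := (Continuous.mul continuous_const (Continuous.rexp (by continuity))).intervalIntegrable _ _
  rw [intervalIntegral.integral_add hInt1 hInt2,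
    intervalIntegral.integral_const_mul, intervalIntegral.integral_const_mul,
    I2_eq C σX hσ, gauss0 C σX hσ, ← hEdef, ← hAdef]
  -- now pure algebra
  have hlog : Real.log (Real.sqrt (2 * π * Real.exp 1) * σX * E)
      = 1 / 2 + Real.log A := by
    have h1 : Real.sqrt (2 * π * Real.exp 1) = Real.sqrt (2 * π) * Real.sqrt (Real.exp 1) :=
      Real.sqrt_mul (by positivity) _
    rw [h1, hAdef]
    rw [show Real.sqrt (2 * π) * Real.sqrt (Real.exp 1) * σX * E
        = Real.sqrt (Real.exp 1) * (Real.sqrt (2 * π) * σX * E) by ring]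
    rw [Real.log_mul (by positivity) (by positivity),
      Real.log_sqrt (Real.exp_pos 1).le, Real.log_exp]
  have hgam : gam (C / σX) = C * Real.exp (-C ^ 2 / (2 * σX ^ 2)) / A := by
    rw [gam, stdGauss, ← hEdef]
    have harg : -(C / σX) ^ 2 / 2 = -C ^ 2 / (2 * σX ^ 2) := by
      rw [div_pow]; ring
    rw [harg, hAdef]
    ring
  rw [hlog, hgam, hc1, hc2]
  field_simp
  ring
end

section
/- Let 𝒳 be a finite nonempty set and 𝒴 a measurable space. Let Q be a probability measure on 𝒳 × 𝒴 with 𝒳-marginal probability mass function q, let m = min{ q(x) : q(x) > 0 }, and suppose the conditional mechanism of Q satisfies (ε, δ)-LDP on the support of q, i.e., for all x, x′ with q(x), q(x′) > 0 and all measurable S ⊆ 𝒴, Q({x} × S)/q(x) ≤ e^ε·Q({x′} × S)/q(x′) + δ. Let P be a probability measure on 𝒳 × 𝒴 with the same 𝒳-marginal q and with ‖P − Q‖_TV ≤ Δ. Then the conditional mechanism of P satisfies (ε, δ + 2(e^ε + 1)·Δ/m)-LDP on the support of q: for all x, x′ with q(x), q(x′) > 0 and all measurable S ⊆ 𝒴,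 P({x} × S)/q(x) ≤ e^ε·P({x′} × S)/q(x′) + δ + 2(e^ε + 1)·Δ/m. -/
open MeasureTheory Real

/-- The total variation distance between two measures:
`‖P − Q‖_TV = sup over measurable sets A of |P(A) − Q(A)|`. -/
noncomputable def tvDist {α : Type*} [MeasurableSpace α] (P Q : Measure α) : ℝ :=
  ⨆ A : {A : Set α // MeasurableSet A}, |(P A).toReal - (Q A).toReal|

/-- If the conditional mechanism of `Q` satisfies `(ε, δ)`-LDP on the support of the common
`𝒳`-marginal `q`, `m` is the minimum positive mass of `q`, and `P` has the same `𝒳`-marginal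
with `‖P − Q‖_TV ≤ Δ`, then the conditional mechanism of `P` satisfies
`(ε, δ + 2(e^ε + 1)Δ/m)`-LDP on the support of `q`. -/
theorem ldp_propagation {X Y : Type*} [Fintype X] [Nonempty X]
    [MeasurableSpace X] [MeasurableSingletonClass X] [MeasurableSpace Y]
    (P Q : Measure (X × Y)) [IsProbabilityMeasure P] [IsProbabilityMeasure Q]
    (q : X → ℝ)
    (hQmarg : ∀ x : X, (Q.map Prod.fst {x}).toReal = q x)
    (hPmarg : ∀ x : X, (P.map Prod.fst {x}).toReal = q x)
    (m ε δ Δ : ℝ) (hε : 0 ≤ ε) (hδ0 : 0 ≤ δ) (hδ1 : δ ≤ 1)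
    (hm_le : ∀ x : X, 0 < q x → m ≤ q x)
    (hm_mem : ∃ x : X, 0 < q x ∧ m = q x)
    (hQLDP : ∀ x x' : X, 0 < q x → 0 < q x' → ∀ S : Set Y, MeasurableSet S →
      (Q ({x} ×ˢ S)).toReal / q x ≤ Real.exp ε * ((Q ({x'} ×ˢ S)).toReal / q x') + δ)
    (hTV : tvDist P Q ≤ Δ) :
    ∀ x x' : X, 0 < q x → 0 < q x' → ∀ S : Set Y, MeasurableSet S →
      (P ({x} ×ˢ S)).toReal / q x
        ≤ Real.exp ε * ((P ({x'} ×ˢ S)).toReal / q x')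
          + δ + 2 * (Real.exp ε + 1) * Δ / m := by

  obtain ⟨x₀, hx₀, hm_eq⟩ := hm_mem
  have hm : 0 < m := hm_eq ▸ hx₀
  have hbdd : BddAbove (Set.range fun A : {A : Set (X × Y) // MeasurableSet A} =>
      |(P (A : Set (X × Y))).toReal - (Q (A : Set (X × Y))).toReal|) := by
    refine ⟨2, ?_⟩
    rintro r ⟨A, rfl⟩
    have h1 : (P (A : Set (X × Y))).toReal ≤ 1 := by
      have := ENNReal.toReal_mono (measure_ne_top P Set.univ)
        (measure_mono (Set.subset_univ (A : Set (X × Y))))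
      simpa using this
    have h2 : (Q (A : Set (X × Y))).toReal ≤ 1 := by
      have := ENNReal.toReal_mono (measure_ne_top Q Set.univ)
        (measure_mono (Set.subset_univ (A : Set (X × Y))))
      simpa using this
    have h3 : 0 ≤ (P (A : Set (X × Y))).toReal := ENNReal.toReal_nonneg
    have h4 : 0 ≤ (Q (A : Set (X × Y))).toReal := ENNReal.toReal_nonneg
    rw [abs_sub_le_iff]
    constructor <;> linarith
  have hkey : ∀ A : Set (X × Y), MeasurableSet A →
      |(P A).toReal - (Q A).toReal| ≤ Δ := by
    intro A hA
    exact le_trans (le_ciSup hbdd ⟨A, hA⟩) hTV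
  have hΔ : 0 ≤ Δ := le_trans (abs_nonneg _) (hkey ∅ MeasurableSet.empty)
  intro x x' hx hx' S hS
  have hA1 : MeasurableSet ({x} ×ˢ S) := (measurableSet_singleton x).prod hS
  have hA2 : MeasurableSet ({x'} ×ˢ S) := (measurableSet_singleton x').prod hS
  set a := (P ({x} ×ˢ S)).toReal with ha
  set b := (Q ({x} ×ˢ S)).toReal with hb
  set c := (Q ({x'} ×ˢ S)).toReal with hc
  set d := (P ({x'} ×ˢ S)).toReal with hd
  have h1 : a ≤ b + Δ := by
    have := hkey _ hA1
    rw [abs_sub_le_iff] at this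
    linarith [this.1]
  have h2 : c ≤ d + Δ := by
    have := hkey _ hA2
    rw [abs_sub_le_iff] at this
    linarith [this.2]
  have hQ := hQLDP x x' hx hx' S hS
  set E := Real.exp ε with hE
  have hE1 : 1 ≤ E := by
    rw [hE]; calc (1:ℝ) = Real.exp 0 := (Real.exp_zero).symm
    _ ≤ Real.exp ε := Real.exp_le_exp.mpr hε
  have step1 : a / q x ≤ b / q x + Δ / q x := by
    rw [← add_div]
    exact div_le_div_of_nonneg_right h1 hx.le |>.trans_eq rfl
  have step2 : Δ / q x ≤ Δ / m := div_le_div_of_nonneg_left hΔ hm (hm_le x hx)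
  have step3 : Δ / q x' ≤ Δ / m := div_le_div_of_nonneg_left hΔ hm (hm_le x' hx')
  have step4 : E * (c / q x') ≤ E * (d / q x') + E * (Δ / q x') := by
    rw [← mul_add, ← add_div]
    exact mul_le_mul_of_nonneg_left (div_le_div_of_nonneg_right h2 hx'.le) (by linarith)
  have step5 : E * (Δ / q x') ≤ E * (Δ / m) :=
    mul_le_mul_of_nonneg_left step3 (by linarith)
  have step6 : E * (Δ / m) + Δ / m ≤ 2 * (E + 1) * Δ / m := by
    have ht : 0 ≤ Δ / m := div_nonneg hΔ hm.le
    have h : 2 * (E + 1) * Δ / m = 2 * (E + 1) * (Δ / m) := by ring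
    rw [h]
    nlinarith [mul_nonneg (by linarith : (0:ℝ) ≤ E + 1) ht]
  linarith
end

section
/- Let 𝒳 be a finite nonempty set, 𝒴 a measurable space, and n ≥ 1. Let Q be a probability measure on 𝒳 × 𝒴 with 𝒳-marginal probability mass function q, m = min{ q(x) : q(x) > 0 }, and suppose the conditional mechanism of Q satisfies (ε, δ)-LDP on the support of q. Let P be a probability measure on (𝒳 × 𝒴)ⁿ such that the marginal of P on the n 𝒳-coordinates equals the n-fold product q^{⊗n} and ‖P − Q^{⊗n}‖_TV ≤ Δ, where Q^{⊗n} is the n-fold product of Q. Let P₁ denote the marginal of P on the first coordinate pair (x₁, y₁). Then the conditional mechanism of P₁ satisfies (ε, δ + 2(e^ε + 1)·Δ/m)-LDP on the support of q: for all x, x′ with q(x), q(x′) > 0 and all measurable S ⊆ 𝒴, P₁({x} × S)/q(x) ≤ e^ε·P₁({x′} × S)/q(x′) + δ + 2(e^ε + 1)·Δ/m. -/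
open MeasureTheory Real

lemma pi_eval_apply {ι : Type*} [Fintype ι] {α : Type*} [MeasurableSpace α]
    (Q : Measure α) [IsProbabilityMeasure Q] (i : ι) {A : Set α} (hA : MeasurableSet A) :
    (Measure.pi fun _ : ι => Q) ((fun f => f i) ⁻¹' A) = Q A := by
  classical
  have h : (fun f : ι → α => f i) ⁻¹' A =
      Set.pi Set.univ (Function.update (fun _ : ι => (Set.univ : Set α)) i A) :=
    Set.eval_preimage
  rw [h, Measure.pi_pi]
  rw [Finset.prod_eq_single i]
  · simp
  · intro j _ hj; simp [Function.update_of_ne hj]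
  · simp

/-- Privacy-propagation for RDFC: if the conditional mechanism of the single-letter target law
`Q` satisfies `(ε, δ)`-LDP on the support of its `𝒳`-marginal `q` with minimum positive mass
`m`, and `P` is a probability measure on `(𝒳 × 𝒴)ⁿ` whose marginal on the `𝒳`-coordinates is
`q^{⊗n}` and with `‖P − Q^{⊗n}‖_TV ≤ Δ`, then the conditional mechanism of the first
coordinate-pair marginal `P₁` of `P` satisfies `(ε, δ + 2(e^ε + 1)Δ/m)`-LDP on the support of
`q`. -/
theorem ldp_propagation_n_letter {X Y : Type*} [Fintype X] [Nonempty X]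
    [MeasurableSpace X] [MeasurableSingletonClass X] [MeasurableSpace Y]
    (n : ℕ) (hn : 1 ≤ n)
    (Q : Measure (X × Y)) [IsProbabilityMeasure Q]
    (q : X → ℝ)
    (hQmarg : ∀ x : X, (Q.map Prod.fst {x}).toReal = q x)
    (m ε δ Δ : ℝ) (hε : 0 ≤ ε) (hδ0 : 0 ≤ δ) (hδ1 : δ ≤ 1)
    (hm_le : ∀ x : X, 0 < q x → m ≤ q x)
    (hm_mem : ∃ x : X, 0 < q x ∧ m = q x)
    (hQLDP : ∀ x x' : X, 0 < q x → 0 < q x' → ∀ S : Set Y, MeasurableSet S →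
      (Q ({x} ×ˢ S)).toReal / q x ≤ Real.exp ε * ((Q ({x'} ×ˢ S)).toReal / q x') + δ)
    (P : Measure (Fin n → X × Y)) [IsProbabilityMeasure P]
    (hPmarg : P.map (fun f i => (f i).1) = Measure.pi fun _ : Fin n => Q.map Prod.fst)
    (hTV : tvDist P (Measure.pi fun _ : Fin n => Q) ≤ Δ) :
    ∀ x x' : X, 0 < q x → 0 < q x' → ∀ S : Set Y, MeasurableSet S →
      ((P.map fun f => f ⟨0, hn⟩) ({x} ×ˢ S)).toReal / q x
        ≤ Real.exp ε * (((P.map fun f => f ⟨0, hn⟩) ({x'} ×ˢ S)).toReal / q x')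
          + δ + 2 * (Real.exp ε + 1) * Δ / m := by
  intro x x' hx hx' S hS
  set Qn : Measure (Fin n → X × Y) := Measure.pi fun _ : Fin n => Q with hQn
  have : IsProbabilityMeasure Qn := by rw [hQn]; infer_instance
  -- boundedness of the collection of |P A - Qn A|
  have hbdd : BddAbove (Set.range fun A : {A : Set (Fin n → X × Y) // MeasurableSet A} =>
      |(P A).toReal - (Qn A).toReal|) := by
    refine ⟨2, ?_⟩
    rintro r ⟨⟨A, hA⟩, rfl⟩
    have h1 : (P A).toReal ≤ 1 := by
      have := prob_le_one (μ := P) (s := A)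
      exact ENNReal.toReal_le_of_le_ofReal zero_le_one (by simpa using this)
    have h2 : (Qn A).toReal ≤ 1 := by
      have := prob_le_one (μ := Qn) (s := A)
      exact ENNReal.toReal_le_of_le_ofReal zero_le_one (by simpa using this)
    have h3 : 0 ≤ (P A).toReal := ENNReal.toReal_nonneg
    have h4 : 0 ≤ (Qn A).toReal := ENNReal.toReal_nonneg
    rw [abs_sub_le_iff]; constructor <;> linarith
  -- Δ is nonnegative
  have hΔ0 : 0 ≤ Δ := by
    have := le_ciSup hbdd ⟨∅, MeasurableSet.empty⟩
    simp only [measure_empty] at this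
    calc (0:ℝ) ≤ _ := abs_nonneg _
      _ ≤ tvDist P Qn := this
      _ ≤ Δ := hTV
  -- key TV bound on the first-coordinate marginal
  have hmeas_eval : Measurable fun f : Fin n → X × Y => f ⟨0, hn⟩ := measurable_pi_apply _
  have key : ∀ A : Set (X × Y), MeasurableSet A →
      |((P.map fun f => f ⟨0, hn⟩) A).toReal - (Q A).toReal| ≤ Δ := by
    intro A hA
    have hB : MeasurableSet ((fun f : Fin n → X × Y => f ⟨0, hn⟩) ⁻¹' A) := hmeas_eval hA
    have h1 : (P.map fun f => f ⟨0, hn⟩) A = P ((fun f => f ⟨0, hn⟩) ⁻¹' A) :=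
      Measure.map_apply hmeas_eval hA
    have h2 : Qn ((fun f : Fin n → X × Y => f ⟨0, hn⟩) ⁻¹' A) = Q A :=
      pi_eval_apply Q _ hA
    have := le_ciSup hbdd ⟨(fun f : Fin n → X × Y => f ⟨0, hn⟩) ⁻¹' A, hB⟩
    rw [h1]
    calc |(P ((fun f => f ⟨0, hn⟩) ⁻¹' A)).toReal - (Q A).toReal|
        = |(P ((fun f => f ⟨0, hn⟩) ⁻¹' A)).toReal
            - (Qn ((fun f : Fin n → X × Y => f ⟨0, hn⟩) ⁻¹' A)).toReal| := by rw [h2]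
      _ ≤ tvDist P Qn := this
      _ ≤ Δ := hTV
  -- positivity of m
  obtain ⟨x₀, hx₀, hmx₀⟩ := hm_mem
  have hm : 0 < m := hmx₀ ▸ hx₀
  have hmeasS : MeasurableSet ({x} ×ˢ S : Set (X × Y)) :=
    (measurableSet_singleton x).prod hS
  have hmeasS' : MeasurableSet ({x'} ×ˢ S : Set (X × Y)) :=
    (measurableSet_singleton x').prod hS
  have k1 := key _ hmeasS
  have k2 := key _ hmeasS'
  set a := ((P.map fun f => f ⟨0, hn⟩) ({x} ×ˢ S)).toReal
  set a' := ((P.map fun f => f ⟨0, hn⟩) ({x'} ×ˢ S)).toReal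
  set b := (Q ({x} ×ˢ S)).toReal
  set b' := (Q ({x'} ×ˢ S)).toReal
  have hab : a ≤ b + Δ := by
    have := abs_sub_le_iff.mp k1; linarith [this.1]
  have hba' : b' ≤ a' + Δ := by
    have := abs_sub_le_iff.mp k2; linarith [this.2]
  have hQ := hQLDP x x' hx hx' S hS
  have hqx := hm_le x hx
  have hqx' := hm_le x' hx'
  have hexp : (0:ℝ) < Real.exp ε := Real.exp_pos ε
  have step1 : a / q x ≤ b / q x + Δ / m := by
    have h1 : a / q x ≤ (b + Δ) / q x := by gcongr
    have h2 : Δ / q x ≤ Δ / m := by gcongr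
    rw [add_div] at h1; linarith
  have step2 : b' / q x' ≤ a' / q x' + Δ / m := by
    have h1 : b' / q x' ≤ (a' + Δ) / q x' := by gcongr
    have h2 : Δ / q x' ≤ Δ / m := by gcongr
    rw [add_div] at h1; linarith
  have step3 : Real.exp ε * (b' / q x') ≤ Real.exp ε * (a' / q x') + Real.exp ε * (Δ / m) := by
    nlinarith
  have hfinal : (Real.exp ε + 1) * (Δ / m) ≤ 2 * (Real.exp ε + 1) * Δ / m := by
    have : 0 ≤ Δ / m := div_nonneg hΔ0 hm.le
    rw [mul_div_assoc, mul_assoc]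
    nlinarith
  calc a / q x ≤ b / q x + Δ / m := step1
    _ ≤ (Real.exp ε * (b' / q x') + δ) + Δ / m := by linarith
    _ ≤ (Real.exp ε * (a' / q x') + Real.exp ε * (Δ / m) + δ) + Δ / m := by linarith
    _ = Real.exp ε * (a' / q x') + δ + (Real.exp ε + 1) * (Δ / m) := by ring
    _ ≤ Real.exp ε * (a' / q x') + δ + 2 * (Real.exp ε + 1) * Δ / m := by linarith
end
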